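/- arXiv:2003.13651 — 3 statements merged into one kernel-verified Lean document; each statement's English description precedes it below -/
import Mathlib

section
/- In the logic QRC₁, if φ ⊢ ψ[x/c] is derivable, x is not free in φ, and the constant c occurs in neither φ nor ψ, then φ ⊢ ∀xψ is derivable. -/
/-- A signature: constants and relation symbols with arities (no function symbols). -/
structure Signature where
  Const : Type
  Rel : Type
  arity : Rel → ℕ

/-- Terms: variables (numbered) or constants. -/
inductive Term (Sig : Signature) : Type where
  | var : ℕ → Term Sig
  | const : Sig.Const → Term Sig

/-- Strictly positive formulas of QRC₁. -/
inductive Formula (Sig : Signature) : Type where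
  | top : Formula Sig
  | rel : (S : Sig.Rel) → (Fin (Sig.arity S) → Term Sig) → Formula Sig
  | and : Formula Sig → Formula Sig → Formula Sig
  | dia : Formula Sig → Formula Sig
  | all : ℕ → Formula Sig → Formula Sig

namespace Term

variable {Sig : Signature}

def fv : Term Sig → Set ℕ
  | var x => {x}
  | const _ => ∅

def consts : Term Sig → Set Sig.Const
  | var _ => ∅
  | const c => {c}

def subst (t : Term Sig) (x : ℕ) (u : Term Sig) : Term Sig :=
  match t with
  | var y => if y = x then u else var y
  | const c => const c

end Term

namespace Formula

variable {Sig : Signature}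

/-- Free variables of a formula. -/
def fv : Formula Sig → Set ℕ
  | top => ∅
  | rel _ ts => ⋃ i, (ts i).fv
  | and φ ψ => φ.fv ∪ ψ.fv
  | dia φ => φ.fv
  | all x φ => φ.fv \ {x}

/-- Constants occurring in a formula. -/
def consts : Formula Sig → Set Sig.Const
  | top => ∅
  | rel _ ts => ⋃ i, (ts i).consts
  | and φ ψ => φ.consts ∪ ψ.consts
  | dia φ => φ.consts
  | all _ φ => φ.consts

/-- Simultaneous substitution of the term `u` for the free occurrences of `x`. -/
def subst : Formula Sig → ℕ → Term Sig → Formula Sig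
  | top, _, _ => top
  | rel S ts, x, u => rel S (fun i => (ts i).subst x u)
  | and φ ψ, x, u => and (φ.subst x u) (ψ.subst x u)
  | dia φ, x, u => dia (φ.subst x u)
  | all y φ, x, u => if y = x then all y φ else all y (φ.subst x u)

/-- `t` is free for `x` in `φ`: no free variable of `t` becomes bound in `φ[x/t]`. -/
def freeFor : Formula Sig → ℕ → Term Sig → Prop
  | top, _, _ => True
  | rel _ _, _, _ => True
  | and φ ψ, x, t => φ.freeFor x t ∧ ψ.freeFor x t
  | dia φ, x, t => φ.freeFor x t
  | all y φ, x, t => x ∉ (Formula.all y φ).fv ∨ (y ∉ t.fv ∧ φ.freeFor x t)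

/-- Modal depth. -/
def mdepth : Formula Sig → ℕ
  | top => 0
  | rel _ _ => 0
  | and φ ψ => max φ.mdepth ψ.mdepth
  | dia φ => φ.mdepth + 1
  | all _ φ => φ.mdepth

def size : Formula Sig → ℕ
  | top => 1
  | rel _ _ => 1
  | and φ ψ => φ.size + ψ.size + 1
  | dia φ => φ.size + 1
  | all _ φ => φ.size + 1

theorem size_subst (φ : Formula Sig) (x : ℕ) (t : Term Sig) :
    (φ.subst x t).size = φ.size := by
  induction φ with
  | top => rfl
  | rel S ts => rfl
  | and φ ψ ihφ ihψ => simp [Formula.subst, Formula.size, ihφ, ihψ]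
  | dia φ ih => simp [Formula.subst, Formula.size, ih]
  | all y φ ih =>
      by_cases h : y = x <;> simp [Formula.subst, Formula.size, h, ih]

end Formula

/-- Derivability of sequents `φ ⊢ ψ` in QRC₁. -/
inductive Derives {Sig : Signature} : Formula Sig → Formula Sig → Prop where
  | topIntro (φ : Formula Sig) : Derives φ .top
  | refl (φ : Formula Sig) : Derives φ φ
  | andE₁ (φ ψ : Formula Sig) : Derives (.and φ ψ) φ
  | andE₂ (φ ψ : Formula Sig) : Derives (.and φ ψ) ψ
  | andI {φ ψ χ : Formula Sig} : Derives φ ψ → Derives φ χ → Derives φ (.and ψ χ)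
  | cut {φ ψ χ : Formula Sig} : Derives φ ψ → Derives ψ χ → Derives φ χ
  | nec {φ ψ : Formula Sig} : Derives φ ψ → Derives (.dia φ) (.dia ψ)
  | diaTrans (φ : Formula Sig) : Derives (.dia (.dia φ)) (.dia φ)
  | diaAll (x : ℕ) (φ : Formula Sig) : Derives (.dia (.all x φ)) (.all x (.dia φ))
  | allR {φ ψ : Formula Sig} {x : ℕ} : Derives φ ψ → x ∉ φ.fv → Derives φ (.all x ψ)
  | allL {φ ψ : Formula Sig} {x : ℕ} {t : Term Sig} :
      Derives (φ.subst x t) ψ → φ.freeFor x t → Derives (.all x φ) ψ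
  | termInst {φ ψ : Formula Sig} {x : ℕ} {t : Term Sig} :
      Derives φ ψ → φ.freeFor x t → ψ.freeFor x t →
      Derives (φ.subst x t) (ψ.subst x t)
  | constGen {φ ψ : Formula Sig} {x : ℕ} {c : Sig.Const} :
      Derives (φ.subst x (.const c)) (ψ.subst x (.const c)) →
      c ∉ φ.consts → c ∉ ψ.consts → Derives φ ψ

/-- Extension of a signature by a collection `C` of new constants. -/
def Signature.extend (Sig : Signature) (C : Type) : Signature :=
  ⟨Sig.Const ⊕ C, Sig.Rel, Sig.arity⟩

/-- A term of `Sig` seen as a term of the extended signature. -/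
def Term.lift {Sig : Signature} {C : Type} : Term Sig → Term (Sig.extend C)
  | .var x => .var x
  | .const c => .const (Sum.inl c)

/-- A formula of `Sig` seen as a formula of the extended signature. -/
def Formula.lift {Sig : Signature} {C : Type} : Formula Sig → Formula (Sig.extend C)
  | .top => .top
  | .rel S ts => .rel S (fun i => (ts i).lift)
  | .and φ ψ => .and φ.lift ψ.lift
  | .dia φ => .dia φ.lift
  | .all x φ => .all x φ.lift

/-! ### Relational semantics -/

/-- A relational model (on an underlying frame `⟨W, R, D⟩`):
worlds, accessibility, finite domains, constant and relation interpretations. -/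
structure Model (Sig : Signature) where
  W : Type
  U : Type
  nonempty : Nonempty W
  R : W → W → Prop
  D : W → Set U
  Dfin : ∀ w, (D w).Finite
  I : W → Sig.Const → U
  Imem : ∀ w c, I w c ∈ D w
  J : (w : W) → (S : Sig.Rel) → Set (Fin (Sig.arity S) → U)
  Jmem : ∀ w S f, f ∈ J w S → ∀ i, f i ∈ D w

namespace Model

variable {Sig : Signature}

/-- A `w`-assignment: a map from variables into the domain of `w`. -/
def IsAssignment (M : Model Sig) (w : M.W) (g : ℕ → M.U) : Prop :=
  ∀ n, g n ∈ M.D w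

/-- Value of a term at a world under an assignment. -/
def tval (M : Model Sig) (w : M.W) (g : ℕ → M.U) : Term Sig → M.U
  | .var x => g x
  | .const c => M.I w c

end Model

/-- `Γ`-alternative assignments: they agree on all variables outside `Γ`. -/
def AltOn {U : Type} (Γ : Set ℕ) (g h : ℕ → U) : Prop :=
  ∀ y, y ∉ Γ → g y = h y

/-- Truth at a world under an assignment. -/
def Model.Forces {Sig : Signature} (M : Model Sig) :
    M.W → (ℕ → M.U) → Formula Sig → Prop
  | _, _, .top => True
  | w, g, .rel S ts => (fun i => M.tval w g (ts i)) ∈ M.J w S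
  | w, g, .and φ ψ => M.Forces w g φ ∧ M.Forces w g ψ
  | w, g, .dia φ => ∃ v, M.R w v ∧ M.Forces v g φ
  | w, g, .all x φ =>
      ∀ h : ℕ → M.U, M.IsAssignment w h → AltOn {x} g h → M.Forces w h φ

/-- Adequate models: inclusive, transitive, and concordant. -/
def Model.Adequate {Sig : Signature} (M : Model Sig) : Prop :=
  (∀ w u, M.R w u → M.D w ⊆ M.D u) ∧
  (∀ w u v, M.R w u → M.R u v → M.R w v) ∧
  (∀ w u, M.R w u → ∀ c, M.I w c = M.I u c)

/-- The model `M` restricted at the world `r`. -/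
def Model.restrict {Sig : Signature} (M : Model Sig) (r : M.W) : Model Sig where
  W := {w : M.W // w = r ∨ M.R r w}
  U := M.U
  nonempty := ⟨⟨r, Or.inl rfl⟩⟩
  R w v := M.R w.1 v.1
  D w := M.D w.1
  Dfin w := M.Dfin w.1
  I w c := M.I w.1 c
  Imem w c := M.Imem w.1 c
  J w S := M.J w.1 S
  Jmem w S f h i := M.Jmem w.1 S f h i

/-- The model `M` restricted at `r`, with the interpretation of the constant `c`
set to `d ∈ M_r` at every world. -/
noncomputable def Model.restrictSubst {Sig : Signature} (M : Model Sig) (r : M.W) (c : Sig.Const)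
    (d : M.U) (hd : d ∈ M.D r) (hinc : ∀ w u, M.R w u → M.D w ⊆ M.D u) : Model Sig :=
  { M.restrict r with
    I := fun w c' => @ite _ (c' = c) (Classical.propDecidable _) d (M.I w.1 c')
    Imem := by
      intro w c'
      by_cases h : c' = c
      · simp only [h, if_pos rfl]
        rcases w.2 with h' | h'
        · show d ∈ M.D w.1; rw [h']; exact hd
        · exact hinc r w.1 h' hd
      · simp only [h]
        exact M.Imem w.1 c' }

/-! ### Pairs, closure, maximal consistency -/

/-- A pair of sets of formulas (positive and negative part). -/
structure Pair (Sig : Signature) where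
  pos : Set (Formula Sig)
  neg : Set (Formula Sig)

/-- `Γ ⊢ φ`: some finite conjunction of members of `Γ` derives `φ`. -/
def SetDerives {Sig : Signature} (Γ : Set (Formula Sig)) (φ : Formula Sig) : Prop :=
  ∃ (γ : Formula Sig) (l : List (Formula Sig)),
    γ ∈ Γ ∧ (∀ δ ∈ l, δ ∈ Γ) ∧ Derives (l.foldl Formula.and γ) φ

namespace Pair

variable {Sig : Signature}

/-- A pair is consistent if no member of the negative part follows from the positive part. -/
def Consistent (p : Pair Sig) : Prop :=
  ∀ δ ∈ p.neg, ¬ SetDerives p.pos δ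

/-- `q` is a `Φ`-extension of `p`. -/
def Ext (p q : Pair Sig) (Φ : Set (Formula Sig)) : Prop :=
  p.pos ⊆ q.pos ∧ q.pos ⊆ Φ ∧ p.neg ⊆ q.neg ∧ q.neg ⊆ Φ

/-- `Φ`-maximal consistency. -/
def MaxCons (p : Pair Sig) (Φ : Set (Formula Sig)) : Prop :=
  p.Consistent ∧ p.pos ⊆ Φ ∧ p.neg ⊆ Φ ∧
    ∀ q : Pair Sig, p.Ext q Φ → q.Consistent → q = p

/-- A pair is fully witnessed if every negative universal has a constant witness. -/
def FullyWitnessed (p : Pair Sig) : Prop :=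
  ∀ (x : ℕ) (φ : Formula Sig), Formula.all x φ ∈ p.neg →
    ∃ c : Sig.Const, φ.subst x (.const c) ∈ p.neg

end Pair

/-- Closure of a formula under a set of constants. -/
def Cl {Sig : Signature} (C : Set Sig.Const) : Formula Sig → Set (Formula Sig)
  | .top => {.top}
  | .rel S ts => {.rel S ts, .top}
  | .and φ ψ => {.and φ ψ} ∪ Cl C φ ∪ Cl C ψ
  | .dia φ => {.dia φ} ∪ Cl C φ
  | .all x φ => {.all x φ} ∪ ⋃ c ∈ C, Cl C (φ.subst x (.const c))
termination_by φ => φ.size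
decreasing_by
  all_goals simp [Formula.size, Formula.size_subst]
  all_goals omega

/-- Closure of a set of formulas under a set of constants. -/
def ClSet {Sig : Signature} (C : Set Sig.Const) (Γ : Set (Formula Sig)) :
    Set (Formula Sig) :=
  ⋃ φ ∈ Γ, Cl C φ

/-- Modal depth of a set of formulas (as a supremum in ℕ). -/
noncomputable def mdepthSet {Sig : Signature} (Γ : Set (Formula Sig)) : ℕ :=
  sSup (Formula.mdepth '' Γ)

/-- The relation `R̂` between pairs. -/
def hatR {Sig : Signature} (p q : Pair Sig) : Prop :=
  (∀ φ : Formula Sig, Formula.dia φ ∈ p.neg → φ ∈ q.neg ∧ Formula.dia φ ∈ q.neg) ∧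
  (∃ ψ : Formula Sig, Formula.dia ψ ∈ p.pos ∧ Formula.dia ψ ∈ q.neg)

section Substitution

variable {Sig : Signature}

theorem Term.subst_of_notMem_fv {t : Term Sig} {x : ℕ} (h : x ∉ t.fv) (u : Term Sig) :
    t.subst x u = t := by
  cases t with
  | var z =>
      have hz : z ≠ x := fun e => h (by simp [Term.fv, e])
      simp [Term.subst, hz]
  | const c => rfl

theorem Formula.subst_of_notMem_fv {φ : Formula Sig} {x : ℕ} (h : x ∉ φ.fv) (u : Term Sig) :
    φ.subst x u = φ := by
  induction φ with
  | top => rfl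
  | rel S ts =>
      simp only [Formula.fv, Set.mem_iUnion, not_exists] at h
      simp only [Formula.subst, Formula.rel.injEq, heq_eq_eq, true_and]
      funext i
      exact Term.subst_of_notMem_fv (h i) u
  | and φ χ ihφ ihχ =>
      simp only [Formula.fv, Set.mem_union, not_or] at h
      simp [Formula.subst, ihφ h.1, ihχ h.2]
  | dia φ ih => simp [Formula.subst, ih h]
  | all z φ ih =>
      by_cases hz : z = x
      · simp [Formula.subst, hz]
      · have hx : x ∉ φ.fv := fun hφ => h ⟨hφ, Ne.symm hz⟩
        simp [Formula.subst, hz, ih hx]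

end Substitution

/-- In QRC₁, if φ ⊢ ψ[x/c], x is not free in φ, and the constant c
occurs in neither φ nor ψ, then φ ⊢ ∀xψ. -/
theorem qrc1_const_to_all (Sig : Signature) (φ ψ : Formula Sig) (x : ℕ) (c : Sig.Const)
    (hd : Derives φ (ψ.subst x (Term.const c))) (hx : x ∉ φ.fv)
    (hc1 : c ∉ φ.consts) (hc2 : c ∉ ψ.consts) :
    Derives φ (Formula.all x ψ) := by
  -- Since `φ[x/c] = φ`, constant generalisation applies to `x` itself.
  have hφ : Derives φ ψ := by
    refine Derives.constGen (x := x) (c := c) ?_ hc1 hc2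
    rwa [Formula.subst_of_notMem_fv hx]
  exact Derives.allR hφ hx
end

section
/- The relation R̂ restricted to consistent pairs of QRC₁ formulas is transitive and irreflexive. -/
theorem SetDerives.of_mem {Sig : Signature} {Γ : Set (Formula Sig)} {φ : Formula Sig}
    (h : φ ∈ Γ) : SetDerives Γ φ :=
  ⟨φ, [], h, by simp, Derives.refl φ⟩

theorem hatR.trans {Sig : Signature} {p q r : Pair Sig} (hpq : hatR p q) (hqr : hatR q r) :
    hatR p r := by
  obtain ⟨hpq_neg, ψ, hψ_pos, hψ_neg⟩ := hpq
  exact ⟨fun φ hφ => hqr.1 φ (hpq_neg φ hφ).2, ψ, hψ_pos, (hqr.1 ψ hψ_neg).2⟩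

theorem Pair.Consistent.not_hatR_self {Sig : Signature} {p : Pair Sig} (hp : p.Consistent) :
    ¬ hatR p p := by
  rintro ⟨-, ψ, hψ_pos, hψ_neg⟩
  exact hp _ hψ_neg (SetDerives.of_mem hψ_pos)

/-- The relation R̂ restricted to consistent pairs is transitive and
irreflexive. -/
theorem hatR_trans_irrefl (Sig : Signature) :
    (∀ p q r : Pair Sig, p.Consistent → q.Consistent → r.Consistent →
      hatR p q → hatR q r → hatR p r) ∧
    (∀ p : Pair Sig, p.Consistent → ¬ hatR p p) :=
  ⟨fun _ _ _ _ _ _ => hatR.trans, fun _ => Pair.Consistent.not_hatR_self⟩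
end

section
/- Relational completeness of QRC₁: if the sequent φ ⊢ ψ is not derivable in QRC₁, then there exist an adequate relational model M, a world w of M, and a w-assignment g such that M,w ⊩^g φ and M,w ⊮^g ψ. -/
/-!
A canonical model construction. A world is built from a positive seed `γ` and a finite list of
negative formulas, none derivable from `γ`. Its positive formulas are those obtained from `γ` by
conjunction elimination and by instantiating universal quantifiers with the finitely many terms
of its domain: the variables met so far and the constants of the sequent. The negative list is
saturated: a negative conjunction keeps a conjunct not derivable from `γ`, and a negative
universal formula an instance on a fresh variable, which joins the domain. A positive `◇α`
creates a successor with seed `α` which inherits `θ` and `◇θ` for every negative `◇θ`; this is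
where `◇◇θ ⊢ ◇θ` enters. Relation symbols are interpreted by the positive atoms, and the truth
lemma, by induction on the size of formulas, shows that positive formulas hold and negative ones
fail. The root has seed `φ` and negative `ψ`.

Instantiating with a domain variable must not capture it, so domains avoid the bound variables of
`φ` and `ψ`. Free variables of the sequent that also occur bound are first renamed to fresh ones,
a renaming that preserves both underivability and countermodels.
-/

namespace Term

variable {Sig : Signature}

def vars : Term Sig → Finset ℕ
  | var x => {x}
  | const _ => ∅

lemma coe_vars (t : Term Sig) : (t.vars : Set ℕ) = t.fv := by
  cases t <;> simp [vars, fv]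

lemma fv_subst (s : Term Sig) (x : ℕ) (t : Term Sig) :
    (s.subst x t).fv ⊆ (s.fv \ {x}) ∪ t.fv := by
  cases s with
  | var y => by_cases h : y = x <;> simp [subst, fv, h]
  | const c => simp [subst, fv]

lemma consts_subst (s : Term Sig) (x : ℕ) (t : Term Sig) :
    (s.subst x t).consts ⊆ s.consts ∪ t.consts := by
  cases s with
  | var y => by_cases h : y = x <;> simp [subst, consts, h]
  | const c => simp [subst, consts]

end Term

namespace Formula

variable {Sig : Signature}

def bv : Formula Sig → Set ℕ
  | top => ∅
  | rel _ _ => ∅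
  | and φ ψ => φ.bv ∪ ψ.bv
  | dia φ => φ.bv
  | all x φ => insert x φ.bv

def vars : Formula Sig → Finset ℕ
  | top => ∅
  | rel _ ts => Finset.univ.biUnion fun i => (ts i).vars
  | and φ ψ => φ.vars ∪ ψ.vars
  | dia φ => φ.vars
  | all x φ => insert x φ.vars

lemma fv_subset_vars (φ : Formula Sig) : φ.fv ⊆ φ.vars := by
  induction φ with
  | top => simp [fv]
  | rel S ts => intro n; simp [fv, vars, ← Term.coe_vars]
  | and φ ψ ihφ ihψ => simpa [fv, vars] using ⟨ihφ.trans (by simp), ihψ.trans (by simp)⟩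
  | dia φ ih => exact ih
  | all x φ ih => simpa [fv, vars] using ih.trans (Set.subset_insert x _)

lemma bv_subset_vars (φ : Formula Sig) : φ.bv ⊆ φ.vars := by
  induction φ with
  | top => simp [bv]
  | rel S ts => simp [bv]
  | and φ ψ ihφ ihψ => simpa [bv, vars] using ⟨ihφ.trans (by simp), ihψ.trans (by simp)⟩
  | dia φ ih => exact ih
  | all x φ ih => simpa [bv, vars] using Set.insert_subset_insert ih

lemma fv_finite (φ : Formula Sig) : φ.fv.Finite :=
  φ.vars.finite_toSet.subset φ.fv_subset_vars

lemma consts_finite (φ : Formula Sig) : φ.consts.Finite := by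
  induction φ with
  | top => exact Set.finite_empty
  | rel S ts =>
      refine Set.finite_iUnion fun i => ?_
      cases ts i <;> simp [Term.consts]
  | and φ ψ ihφ ihψ => exact ihφ.union ihψ
  | dia φ ih => exact ih
  | all x φ ih => exact ih

lemma fv_subst (φ : Formula Sig) (x : ℕ) (t : Term Sig) :
    (φ.subst x t).fv ⊆ (φ.fv \ {x}) ∪ t.fv := by
  induction φ with
  | top => simp [subst, fv]
  | rel S ts =>
      simp only [subst, fv, Set.iUnion_subset_iff]
      intro i
      refine (Term.fv_subst _ x t).trans (Set.union_subset_union_left _ ?_)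
      exact Set.sdiff_subset_sdiff_left (Set.subset_iUnion (fun i => (ts i).fv) i)
  | and φ ψ ihφ ihψ =>
      simp only [subst, fv]
      refine Set.union_subset (ihφ.trans ?_) (ihψ.trans ?_) <;>
        exact Set.union_subset_union_left _ (Set.sdiff_subset_sdiff_left (by simp))
  | dia φ ih => exact ih
  | all y φ ih =>
      by_cases h : y = x
      · simp only [subst, h, if_true, fv]
        exact Set.subset_union_of_subset_left (by simp) _
      · simp only [subst, h, if_false, fv]
        intro n ⟨hn, hny⟩
        rcases ih hn with ⟨hn, hnx⟩ | hn
        · exact Or.inl ⟨⟨hn, hny⟩, hnx⟩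
        · exact Or.inr hn

@[simp] lemma bv_subst (φ : Formula Sig) (x : ℕ) (t : Term Sig) :
    (φ.subst x t).bv = φ.bv := by
  induction φ with
  | top | rel => rfl
  | and φ ψ ihφ ihψ => simp [subst, bv, ihφ, ihψ]
  | dia φ ih => simp [subst, bv, ih]
  | all y φ ih => by_cases h : y = x <;> simp [subst, bv, h, ih]

lemma consts_subst (φ : Formula Sig) (x : ℕ) (t : Term Sig) :
    (φ.subst x t).consts ⊆ φ.consts ∪ t.consts := by
  induction φ with
  | top => simp [subst, consts]
  | rel S ts =>
      simp only [subst, consts, Set.iUnion_subset_iff]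
      intro i
      refine (Term.consts_subst _ x t).trans (Set.union_subset_union_left _ ?_)
      exact Set.subset_iUnion (fun i => (ts i).consts) i
  | and φ ψ ihφ ihψ =>
      simp only [subst, consts]
      refine Set.union_subset (ihφ.trans ?_) (ihψ.trans ?_) <;>
        exact Set.union_subset_union_left _ (by simp)
  | dia φ ih => exact ih
  | all y φ ih => by_cases h : y = x <;> simp [subst, consts, h, ih]

lemma subst_eq_self {φ : Formula Sig} {x : ℕ} (t : Term Sig) (h : x ∉ φ.fv) :
    φ.subst x t = φ := by
  induction φ with
  | top => rfl
  | rel S ts =>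
      simp only [fv, Set.mem_iUnion, not_exists] at h
      simp only [subst, rel.injEq, heq_eq_eq, true_and]
      funext i
      specialize h i
      cases hi : ts i with
      | var y => simp_all [Term.subst, Term.fv, eq_comm]
      | const c => rfl
  | and φ ψ ihφ ihψ =>
      simp only [fv, Set.mem_union, not_or] at h
      simp [subst, ihφ h.1, ihψ h.2]
  | dia φ ih => simp [subst, ih h]
  | all y φ ih =>
      by_cases hxy : y = x
      · simp [subst, hxy]
      · have : x ∉ φ.fv := fun hx => h ⟨hx, Ne.symm hxy⟩
        simp [subst, hxy, ih this]

@[simp] lemma subst_var_self (φ : Formula Sig) (x : ℕ) : φ.subst x (.var x) = φ := by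
  induction φ with
  | top => rfl
  | rel S ts =>
      simp only [subst, rel.injEq, heq_eq_eq, true_and]
      funext i
      cases ts i with
      | var y => by_cases h : y = x <;> simp [Term.subst, h]
      | const c => rfl
  | and φ ψ ihφ ihψ => simp [subst, ihφ, ihψ]
  | dia φ ih => simp [subst, ih]
  | all y φ ih => by_cases h : y = x <;> simp [subst, h, ih]

lemma subst_subst_var {φ : Formula Sig} {x z : ℕ} (t : Term Sig)
    (hfv : z ∉ φ.fv) (hbv : z ∉ φ.bv) :
    (φ.subst x (.var z)).subst z t = φ.subst x t := by
  induction φ with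
  | top => rfl
  | rel S ts =>
      simp only [subst, rel.injEq, heq_eq_eq, true_and]
      funext i
      have hi : z ∉ (ts i).fv := fun h => hfv (Set.mem_iUnion.mpr ⟨i, h⟩)
      cases hts : ts i with
      | var y =>
          have hyz : y ≠ z := by rintro rfl; simp [hts, Term.fv] at hi
          by_cases h : y = x <;> simp [Term.subst, h, hyz]
      | const c => rfl
  | and φ ψ ihφ ihψ =>
      simp only [fv, bv, Set.mem_union, not_or] at hfv hbv
      simp [subst, ihφ hfv.1 hbv.1, ihψ hfv.2 hbv.2]
  | dia φ ih => simp [subst, ih hfv hbv]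
  | all y φ ih =>
      simp only [bv, Set.mem_insert_iff, not_or] at hbv
      have hfv' : z ∉ φ.fv := fun hz => hfv ⟨hz, hbv.1⟩
      by_cases h : y = x
      · subst h
        simp [subst, Ne.symm hbv.1, subst_eq_self t hfv']
      · simp [subst, h, Ne.symm hbv.1, ih hfv' hbv.2]

lemma freeFor_const (φ : Formula Sig) (x : ℕ) (c : Sig.Const) :
    φ.freeFor x (.const c) := by
  induction φ with
  | top | rel => trivial
  | and φ ψ ihφ ihψ => exact ⟨ihφ, ihψ⟩
  | dia φ ih => exact ih
  | all y φ ih => exact Or.inr ⟨by simp [Term.fv], ih⟩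

lemma freeFor_var {φ : Formula Sig} {y : ℕ} (h : y ∉ φ.bv) (x : ℕ) :
    φ.freeFor x (.var y) := by
  induction φ with
  | top | rel => trivial
  | and φ ψ ihφ ihψ =>
      simp only [bv, Set.mem_union, not_or] at h
      exact ⟨ihφ h.1, ihψ h.2⟩
  | dia φ ih => exact ih h
  | all z φ ih =>
      simp only [bv, Set.mem_insert_iff, not_or] at h
      exact Or.inr ⟨by simpa [Term.fv] using Ne.symm h.1, ih h.2⟩

lemma freeFor_subst_var {φ : Formula Sig} {x z : ℕ} (hfv : z ∉ φ.fv) (hbv : z ∉ φ.bv) :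
    (φ.subst x (.var z)).freeFor z (.var x) := by
  induction φ with
  | top | rel => trivial
  | and φ ψ ihφ ihψ =>
      simp only [fv, bv, Set.mem_union, not_or] at hfv hbv
      exact ⟨ihφ hfv.1 hbv.1, ihψ hfv.2 hbv.2⟩
  | dia φ ih => exact ih hfv hbv
  | all y φ ih =>
      simp only [bv, Set.mem_insert_iff, not_or] at hbv
      have hfv' : z ∉ φ.fv := fun hz => hfv ⟨hz, hbv.1⟩
      by_cases h : y = x
      · simp only [subst, h, if_true]
        exact Or.inl (h ▸ hfv)
      · simp only [subst, h, if_false]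
        exact Or.inr ⟨by simpa [Term.fv] using h, ih hfv' hbv.2⟩

end Formula

namespace Derives

variable {Sig : Signature}

lemma all_elim {θ : Formula Sig} {x : ℕ} {t : Term Sig} (h : θ.freeFor x t) :
    Derives (.all x θ) (θ.subst x t) :=
  allL (.refl _) h

lemma all_intro_of_fresh {γ θ : Formula Sig} {x z : ℕ}
    (hγ : z ∉ γ.fv) (hfv : z ∉ θ.fv) (hbv : z ∉ θ.bv)
    (h : Derives γ (θ.subst x (.var z))) : Derives γ (.all x θ) := by
  have hθ : Derives (.all z (θ.subst x (.var z))) θ := by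
    have := all_elim (Formula.freeFor_subst_var (x := x) hfv hbv)
    rwa [Formula.subst_subst_var _ hfv hbv, Formula.subst_var_self] at this
  have hx : x ∉ (Formula.all z (θ.subst x (.var z))).fv := fun ⟨hx, hxz⟩ => by
    rcases Formula.fv_subst θ x _ hx with ⟨_, hxx⟩ | hxz'
    · exact hxx rfl
    · exact hxz hxz'
  exact (h.allR hγ).cut (hθ.allR hx)

lemma of_subst_var {φ ψ : Formula Sig} {x z : ℕ}
    (hφ : z ∉ φ.fv ∧ z ∉ φ.bv) (hψ : z ∉ ψ.fv ∧ z ∉ ψ.bv)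
    (h : Derives (φ.subst x (.var z)) (ψ.subst x (.var z))) : Derives φ ψ := by
  have := h.termInst (Formula.freeFor_subst_var hφ.1 hφ.2)
    (Formula.freeFor_subst_var hψ.1 hψ.2)
  rwa [Formula.subst_subst_var _ hφ.1 hφ.2, Formula.subst_subst_var _ hψ.1 hψ.2,
    Formula.subst_var_self, Formula.subst_var_self] at this

end Derives

namespace AltOn

variable {U : Type} {g h : ℕ → U}

lemma update_self (x : ℕ) (a : U) : AltOn {x} g (Function.update g x a) := fun _ hn =>
  (Function.update_of_ne hn a g).symm

lemma update_eq {x : ℕ} (hgh : AltOn {x} g h) : Function.update g x (h x) = h :=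
  Function.update_eq_iff.mpr ⟨rfl, fun n hn => hgh n hn⟩

lemma update {y : ℕ} (hgh : AltOn {y} g h) (x : ℕ) (a : U) :
    AltOn {y} (Function.update g x a) (Function.update h x a) := fun n hn => by
  rcases eq_or_ne n x with rfl | hnx
  · simp
  · simp [hnx, hgh n hn]

end AltOn

namespace Model

variable {Sig : Signature}

def Inclusive (M : Model Sig) : Prop :=
  ∀ w u, M.R w u → M.D w ⊆ M.D u

def Concordant (M : Model Sig) : Prop :=
  ∀ w u, M.R w u → ∀ c, M.I w c = M.I u c

variable {M : Model Sig} {w v : M.W} {g g' : ℕ → M.U}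

lemma IsAssignment.mono (hM : M.Inclusive) (hg : M.IsAssignment w g) (hR : M.R w v) :
    M.IsAssignment v g :=
  fun n => hM w v hR (hg n)

lemma IsAssignment.update (hg : M.IsAssignment w g) (x : ℕ) {a : M.U} (ha : a ∈ M.D w) :
    M.IsAssignment w (Function.update g x a) := fun n => by
  rcases eq_or_ne n x with rfl | hnx
  · simpa using ha
  · simpa [hnx] using hg n

lemma tval_mem (hg : M.IsAssignment w g) (t : Term Sig) : M.tval w g t ∈ M.D w := by
  cases t with
  | var y => exact hg y
  | const c => exact M.Imem w c

lemma tval_of_R (hM : M.Concordant) (hR : M.R w v) (t : Term Sig) :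
    M.tval v g t = M.tval w g t := by
  cases t with
  | var y => rfl
  | const c => exact (hM w v hR c).symm

lemma tval_congr {t : Term Sig} (h : ∀ n ∈ t.fv, g n = g' n) : M.tval w g t = M.tval w g' t := by
  cases t with
  | var y => exact h y rfl
  | const c => rfl

lemma tval_subst (s : Term Sig) (x : ℕ) (t : Term Sig) :
    M.tval w g (s.subst x t) = M.tval w (Function.update g x (M.tval w g t)) s := by
  cases s with
  | var y => by_cases h : y = x <;> simp [Term.subst, tval, h]
  | const c => rfl

lemma forces_of_eqOn_fv (hM : M.Inclusive) {χ : Formula Sig} :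
    ∀ {w g g'}, M.IsAssignment w g → M.IsAssignment w g' →
      (∀ n ∈ χ.fv, g n = g' n) → M.Forces w g χ → M.Forces w g' χ := by
  induction χ with
  | top => exact fun _ _ _ _ => trivial
  | rel S ts =>
      intro w g g' _ _ hfv hχ
      have : (fun i => M.tval w g' (ts i)) = fun i => M.tval w g (ts i) := funext fun i =>
        tval_congr fun n hn => (hfv n (Set.mem_iUnion.mpr ⟨i, hn⟩)).symm
      exact (congrArg (· ∈ M.J w S) this).mpr hχ
  | and α β ihα ihβ =>
      intro w g g' hg hg' hfv hχ
      exact ⟨ihα hg hg' (fun n hn => hfv n (Or.inl hn)) hχ.1,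
        ihβ hg hg' (fun n hn => hfv n (Or.inr hn)) hχ.2⟩
  | dia α ih =>
      rintro w g g' hg hg' hfv ⟨v, hR, hα⟩
      exact ⟨v, hR, ih (hg.mono hM hR) (hg'.mono hM hR) hfv hα⟩
  | all x θ ih =>
      intro w g g' hg hg' hfv hχ h hh hg'h
      refine ih (hg.update x (hh x)) hh (fun n hn => ?_) (hχ _ (hg.update x (hh x))
        (AltOn.update_self x _))
      rcases eq_or_ne n x with rfl | hnx
      · simp
      · rw [Function.update_of_ne hnx, hfv n ⟨hn, hnx⟩, hg'h n hnx]

lemma forces_congr (hM : M.Inclusive) {χ : Formula Sig} (hg : M.IsAssignment w g)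
    (hg' : M.IsAssignment w g') (hfv : ∀ n ∈ χ.fv, g n = g' n) :
    M.Forces w g χ ↔ M.Forces w g' χ :=
  ⟨forces_of_eqOn_fv hM hg hg' hfv,
    forces_of_eqOn_fv hM hg' hg fun n hn => (hfv n hn).symm⟩

lemma forces_subst (hinc : M.Inclusive) (hconc : M.Concordant) {χ : Formula Sig} :
    ∀ {w g x} {t : Term Sig}, χ.freeFor x t → M.IsAssignment w g →
      (M.Forces w g (χ.subst x t) ↔ M.Forces w (Function.update g x (M.tval w g t)) χ) := by
  induction χ with
  | top => exact fun _ _ => Iff.rfl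
  | rel S ts =>
      intro w g x t _ _
      simp only [Formula.subst, Forces, tval_subst]
  | and α β ihα ihβ => exact fun hft hg => and_congr (ihα hft.1 hg) (ihβ hft.2 hg)
  | dia α ih =>
      intro w g x t hft hg
      refine exists_congr fun v => and_congr_right fun hR => ?_
      rw [ih hft (hg.mono hinc hR), tval_of_R hconc hR]
  | all y θ ih =>
      intro w g x t hft hg
      have hupd := hg.update x (tval_mem hg t)
      by_cases hyx : y = x
      · subst hyx
        simp only [Formula.subst, if_true]
        exact forces_congr hinc hg hupd fun n hn => (Function.update_of_ne hn.2 _ _).symm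
      rcases hft with hx | ⟨hyt, hft⟩
      · rw [Formula.subst_eq_self t hx]
        exact forces_congr hinc hg hupd fun n hn =>
          (Function.update_of_ne (fun (h : n = x) => hx (h ▸ hn)) _ _).symm
      simp only [Formula.subst, hyx, if_false, Forces]
      -- the `y`-alternatives of `g` and of `g[x ↦ a]` correspond through `h ↦ h[x ↦ a]`
      have htval : ∀ h, AltOn {y} g h → M.tval w h t = M.tval w g t := fun h hgh =>
        tval_congr fun n hn => (hgh n fun hny => hyt (hny ▸ hn)).symm
      constructor
      · intro H h' hh' hgh'
        have hx : M.tval w g t = h' x := by simpa using hgh' x (Ne.symm hyx)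
        have hgh : AltOn {y} g (Function.update h' x (g x)) := by
          simpa using hgh'.update x (g x)
        have := (ih hft (hh'.update x (hg x))).mp (H _ (hh'.update x (hg x)) hgh)
        rwa [htval _ hgh, Function.update_idem, hx, Function.update_eq_self] at this
      · intro H h hh hgh
        rw [ih hft hh, htval h hgh]
        exact H _ (hh.update x (tval_mem hg t)) (hgh.update x _)

end Model

section

variable {Sig : Signature}

def Term.InScope (V : Set ℕ) (C : Set Sig.Const) : Term Sig → Prop
  | .var y => y ∈ V
  | .const c => c ∈ C

lemma Term.InScope.fv_subset {V : Set ℕ} {C : Set Sig.Const} {t : Term Sig}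
    (ht : t.InScope V C) : t.fv ⊆ V := by
  cases t with
  | var y => exact Set.singleton_subset_iff.mpr ht
  | const c => simp [Term.fv]

lemma Term.InScope.consts_subset {V : Set ℕ} {C : Set Sig.Const} {t : Term Sig}
    (ht : t.InScope V C) : t.consts ⊆ C := by
  cases t with
  | var y => simp [Term.consts]
  | const c => exact Set.singleton_subset_iff.mpr ht

structure Formula.InScope (V B : Set ℕ) (C : Set Sig.Const) (χ : Formula Sig) : Prop where
  fv_subset : χ.fv ⊆ V
  bv_subset : χ.bv ⊆ B
  consts_subset : χ.consts ⊆ C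

namespace Formula.InScope

variable {V V' B : Set ℕ} {C : Set Sig.Const}

lemma mono {χ : Formula Sig} (h : χ.InScope V B C) (hV : V ⊆ V') : χ.InScope V' B C :=
  ⟨h.fv_subset.trans hV, h.bv_subset, h.consts_subset⟩

lemma and_left {α β : Formula Sig} (h : (Formula.and α β).InScope V B C) : α.InScope V B C :=
  ⟨fun _ hn => h.fv_subset (Or.inl hn), fun _ hn => h.bv_subset (Or.inl hn),
    fun _ hc => h.consts_subset (Or.inl hc)⟩

lemma and_right {α β : Formula Sig} (h : (Formula.and α β).InScope V B C) : β.InScope V B C :=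
  ⟨fun _ hn => h.fv_subset (Or.inr hn), fun _ hn => h.bv_subset (Or.inr hn),
    fun _ hc => h.consts_subset (Or.inr hc)⟩

lemma of_dia {α : Formula Sig} (h : (Formula.dia α).InScope V B C) : α.InScope V B C :=
  ⟨h.fv_subset, h.bv_subset, h.consts_subset⟩

lemma rel_terms {S : Sig.Rel} {ts : Fin (Sig.arity S) → Term Sig}
    (h : (Formula.rel S ts).InScope V B C) (i : Fin (Sig.arity S)) : (ts i).InScope V C := by
  have hfv := h.fv_subset
  have hc := h.consts_subset
  simp only [Formula.fv, Formula.consts, Set.iUnion_subset_iff] at hfv hc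
  cases hts : ts i with
  | var y => exact hfv i (by simp [hts, Term.fv])
  | const c => exact hc i (by simp [hts, Term.consts])

lemma subst {x : ℕ} {θ : Formula Sig} {t : Term Sig} (h : (Formula.all x θ).InScope V B C)
    (ht : t.InScope V C) : (θ.subst x t).InScope V B C where
  fv_subset := (θ.fv_subst x t).trans (Set.union_subset h.fv_subset ht.fv_subset)
  bv_subset := by
    rw [bv_subst]
    exact fun n hn => h.bv_subset (Set.mem_insert_of_mem x hn)
  consts_subset := (θ.consts_subst x t).trans (Set.union_subset h.consts_subset ht.consts_subset)

end Formula.InScope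

inductive InstClosure (γ : Formula Sig) (V : Set ℕ) (C : Set Sig.Const) : Formula Sig → Prop
  | seed : InstClosure γ V C γ
  | left {α β} : InstClosure γ V C (.and α β) → InstClosure γ V C α
  | right {α β} : InstClosure γ V C (.and α β) → InstClosure γ V C β
  | inst {x θ t} : InstClosure γ V C (.all x θ) → t.InScope V C → InstClosure γ V C (θ.subst x t)

namespace InstClosure

variable {γ χ : Formula Sig} {V B : Set ℕ} {C : Set Sig.Const}

lemma inScope (hγ : γ.InScope V B C) (h : InstClosure γ V C χ) : χ.InScope V B C := by
  induction h with
  | seed => exact hγ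
  | left _ ih => exact ih.and_left
  | right _ ih => exact ih.and_right
  | inst _ ht ih => exact ih.subst ht

lemma derives (hγ : γ.InScope V B C) (hVB : Disjoint V B) (h : InstClosure γ V C χ) :
    Derives γ χ := by
  induction h with
  | seed => exact .refl γ
  | left _ ih => exact ih.cut (.andE₁ _ _)
  | right _ ih => exact ih.cut (.andE₂ _ _)
  | @inst x θ t hall ht ih =>
      refine ih.cut (Derives.all_elim ?_)
      cases t with
      | const c => exact θ.freeFor_const x c
      | var y =>
          refine Formula.freeFor_var (fun hy => hVB.notMem_of_mem_left ht ?_) x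
          exact (hall.inScope hγ).bv_subset (Set.mem_insert_of_mem x hy)

end InstClosure

structure Saturated (L : List (Formula Sig)) (Z : Set ℕ) : Prop where
  and_mem : ∀ {α β}, .and α β ∈ L → α ∈ L ∨ β ∈ L
  all_mem : ∀ {x θ}, .all x θ ∈ L → ∃ z ∈ Z, θ.subst x (.var z) ∈ L

namespace Saturated

variable {L : List (Formula Sig)} {Z : Set ℕ}

lemma mono {Z' : Set ℕ} (h : Saturated L Z) (hZ : Z ⊆ Z') : Saturated L Z' :=
  ⟨h.and_mem, fun hxθ => (h.all_mem hxθ).imp fun _ ⟨hz, hzL⟩ => ⟨hZ hz, hzL⟩⟩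

lemma cons {δ : Formula Sig} (h : Saturated L Z)
    (hand : ∀ {α β}, δ = .and α β → α ∈ L ∨ β ∈ L)
    (hall : ∀ {x θ}, δ = .all x θ → ∃ z ∈ Z, θ.subst x (.var z) ∈ L) :
    Saturated (δ :: L) Z := by
  refine ⟨fun hαβ => ?_, fun hxθ => ?_⟩
  · rcases List.mem_cons.mp hαβ with he | hαβ
    · exact (hand he.symm).imp (List.mem_cons_of_mem δ) (List.mem_cons_of_mem δ)
    · exact (h.and_mem hαβ).imp (List.mem_cons_of_mem δ) (List.mem_cons_of_mem δ)
  · rcases List.mem_cons.mp hxθ with he | hxθ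
    · exact (hall he.symm).imp fun _ => And.imp_right (List.mem_cons_of_mem δ)
    · exact (h.all_mem hxθ).imp fun _ => And.imp_right (List.mem_cons_of_mem δ)

end Saturated

structure IsSaturation (γ : Formula Sig) (A : Finset ℕ) (ds L : List (Formula Sig))
    (Z : Finset ℕ) : Prop where
  subset : ds ⊆ L
  disjoint : Disjoint Z A
  saturated : Saturated L Z
  inScope : ∀ {V B C}, (∀ δ ∈ ds, δ.InScope V B C) → ∀ χ ∈ L, χ.InScope (V ∪ Z) B C
  not_derives : (∀ δ ∈ ds, ¬ Derives γ δ) → ∀ χ ∈ L, ¬ Derives γ χ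

namespace IsSaturation

variable {γ : Formula Sig} {A : Finset ℕ} {ds L : List (Formula Sig)} {Z : Finset ℕ}

lemma nil : IsSaturation γ A [] [] ∅ :=
  ⟨List.nil_subset _, Finset.disjoint_empty_left A, ⟨by simp, by simp⟩, by simp, by simp⟩

lemma cons_of_atomic {δ : Formula Sig} (h : IsSaturation γ A ds L Z)
    (hand : ∀ α β, δ ≠ .and α β) (hall : ∀ x θ, δ ≠ .all x θ) :
    IsSaturation γ A (δ :: ds) (δ :: L) Z where
  subset := List.cons_subset_cons δ h.subset
  disjoint := h.disjoint
  saturated := h.saturated.cons (fun he => absurd he (hand _ _)) (fun he => absurd he (hall _ _))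
  inScope hds := by
    simp only [List.forall_mem_cons] at hds ⊢
    exact ⟨hds.1.mono Set.subset_union_left, h.inScope hds.2⟩
  not_derives hds := by
    simp only [List.forall_mem_cons] at hds ⊢
    exact ⟨hds.1, h.not_derives hds.2⟩

lemma cons_and {α β ψ : Formula Sig} (h : IsSaturation γ A (ψ :: ds) L Z)
    (hψ : ψ = α ∨ ψ = β) (hder : ¬ Derives γ (.and α β) → ¬ Derives γ ψ) :
    IsSaturation γ A (.and α β :: ds) (.and α β :: L) Z where
  subset := List.cons_subset_cons _ fun _ hδ => h.subset (List.mem_cons_of_mem ψ hδ)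
  disjoint := h.disjoint
  saturated := by
    have hψL : ψ ∈ L := h.subset List.mem_cons_self
    refine h.saturated.cons (fun he => ?_) (fun he => by cases he)
    obtain ⟨rfl, rfl⟩ := Formula.and.inj he
    rcases hψ with rfl | rfl
    exacts [Or.inl hψL, Or.inr hψL]
  inScope {V B C} hds := by
    simp only [List.forall_mem_cons] at hds ⊢
    have hψ' : ψ.InScope V B C := by
      rcases hψ with rfl | rfl
      · exact hds.1.and_left
      · exact hds.1.and_right
    exact ⟨hds.1.mono Set.subset_union_left, h.inScope (List.forall_mem_cons.mpr ⟨hψ', hds.2⟩)⟩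
  not_derives hds := by
    simp only [List.forall_mem_cons] at hds ⊢
    exact ⟨hds.1, h.not_derives (List.forall_mem_cons.mpr ⟨hder hds.1, hds.2⟩)⟩

lemma cons_all {x z : ℕ} {θ : Formula Sig} (h : IsSaturation γ A (θ.subst x (.var z) :: ds) L Z)
    (hz : z ∉ A ∪ γ.vars ∪ (Formula.all x θ).vars) :
    IsSaturation γ A (.all x θ :: ds) (.all x θ :: L) (insert z Z) where
  subset := List.cons_subset_cons _ fun _ hδ => h.subset (List.mem_cons_of_mem _ hδ)
  disjoint := by
    simp only [Finset.mem_union, not_or] at hz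
    exact Finset.disjoint_insert_left.mpr ⟨hz.1.1, h.disjoint⟩
  saturated := by
    have hzL : θ.subst x (.var z) ∈ L := h.subset List.mem_cons_self
    refine (h.saturated.mono (Finset.coe_subset.mpr (Finset.subset_insert z Z))).cons
      (fun he => by cases he) (fun he => ?_)
    obtain ⟨rfl, rfl⟩ := Formula.all.inj he
    exact ⟨z, by simp, hzL⟩
  inScope {V B C} hds := by
    simp only [List.forall_mem_cons] at hds ⊢
    have hV : insert z V ∪ Z = V ∪ ↑(insert z Z) := by
      ext; simp only [Set.mem_union, Set.mem_insert_iff, Finset.coe_insert]; tauto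
    refine ⟨hds.1.mono Set.subset_union_left, hV ▸ h.inScope ?_⟩
    refine List.forall_mem_cons.mpr ⟨?_, fun δ hδ => (hds.2 δ hδ).mono (Set.subset_insert z V)⟩
    exact (hds.1.mono (Set.subset_insert z V)).subst (Set.mem_insert z V)
  not_derives hds := by
    simp only [List.forall_mem_cons] at hds ⊢
    refine ⟨hds.1, h.not_derives (List.forall_mem_cons.mpr ⟨fun hθ => hds.1 ?_, hds.2⟩)⟩
    simp only [Finset.mem_union, not_or, Formula.vars, Finset.mem_insert] at hz
    refine Derives.all_intro_of_fresh (fun h => hz.1.2 (γ.fv_subset_vars h))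
      (fun h => hz.2.2 (θ.fv_subset_vars h)) (fun h => hz.2.2 (θ.bv_subset_vars h)) hθ

end IsSaturation

theorem exists_isSaturation (γ : Formula Sig) (A : Finset ℕ) (ds : List (Formula Sig)) :
    ∃ L Z, IsSaturation γ A ds L Z := by
  induction h : (ds.map Formula.size).sum using Nat.strong_induction_on generalizing ds with
  | _ n ih =>
  subst h
  match ds with
  | [] => exact ⟨[], ∅, .nil⟩
  | .and α β :: ds =>
      classical
      let ψ := if Derives γ α then β else α
      have hψ : ψ.size < (Formula.and α β).size := by
        simp only [ψ, Formula.size]; split <;> omega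
      obtain ⟨L, Z, hL⟩ := ih _ (by simp [hψ]) (ψ :: ds) rfl
      refine ⟨_, Z, hL.cons_and (by simp only [ψ]; split <;> simp) fun hαβ => ?_⟩
      simp only [ψ]
      split
      · exact fun hβ => hαβ (.andI ‹_› hβ)
      · assumption
  | .all x θ :: ds =>
      obtain ⟨z, hz⟩ := Infinite.exists_notMem_finset (A ∪ γ.vars ∪ (Formula.all x θ).vars)
      obtain ⟨L, Z, hL⟩ := ih _ (by simp [Formula.size_subst, Formula.size])
        (θ.subst x (.var z) :: ds) rfl
      exact ⟨_, _, hL.cons_all hz⟩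
  | .top :: ds | .rel _ _ :: ds | .dia _ :: ds =>
      obtain ⟨L, Z, hL⟩ := ih _ (by simp [Formula.size]) ds rfl
      exact ⟨_, Z, hL.cons_of_atomic (by simp) (by simp)⟩

namespace Canonical

variable (φ ψ : Formula Sig)

def boundVars : Set ℕ := φ.bv ∪ ψ.bv

def consts : Set Sig.Const := φ.consts ∪ ψ.consts

noncomputable def defaultVar : ℕ := (Infinite.exists_notMem_finset (φ.vars ∪ ψ.vars)).choose

lemma defaultVar_notMem : defaultVar φ ψ ∉ φ.vars ∪ ψ.vars :=
  (Infinite.exists_notMem_finset _).choose_spec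

lemma boundVars_subset_vars : boundVars φ ψ ⊆ ↑(φ.vars ∪ ψ.vars) := by
  rw [Finset.coe_union]
  exact Set.union_subset_union φ.bv_subset_vars ψ.bv_subset_vars

structure Node (Sig : Signature) where
  seed : Formula Sig
  neg : List (Formula Sig)
  dom : Set ℕ

def pos (n : Node Sig) : Formula Sig → Prop :=
  InstClosure n.seed n.dom (consts φ ψ)

noncomputable def saturatedNode (γ : Formula Sig) (ds : List (Formula Sig)) (V : Set ℕ) :
    Node Sig :=
  let h := exists_isSaturation γ (φ.vars ∪ ψ.vars) ds
  ⟨γ, h.choose, V ∪ h.choose_spec.choose⟩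

lemma saturatedNode_spec (γ : Formula Sig) (ds : List (Formula Sig)) (V : Set ℕ) :
    ∃ Z, IsSaturation γ (φ.vars ∪ ψ.vars) ds (saturatedNode φ ψ γ ds V).neg Z ∧
      (saturatedNode φ ψ γ ds V).dom = V ∪ Z :=
  ⟨_, (exists_isSaturation γ _ ds).choose_spec.choose_spec, rfl⟩

def inherited : Formula Sig → List (Formula Sig)
  | .dia θ => [θ, .dia θ]
  | _ => []

lemma mem_flatMap_inherited {N : List (Formula Sig)} {χ : Formula Sig} :
    χ ∈ N.flatMap inherited ↔ ∃ θ, .dia θ ∈ N ∧ (χ = θ ∨ χ = .dia θ) := by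
  simp only [List.mem_flatMap]
  constructor
  · rintro ⟨δ, hδ, hχ⟩
    cases δ <;> simp only [inherited, List.mem_cons, List.not_mem_nil] at hχ
    exact ⟨_, hδ, by simpa using hχ⟩
  · rintro ⟨θ, hθ, hχ⟩
    exact ⟨_, hθ, by simpa [inherited] using hχ⟩

/-- A world is coded by the list of formulas `α` of the `◇α` it was created for, along the path
from the root, the most recent first. -/
noncomputable def node : List (Formula Sig) → Node Sig
  | [] => saturatedNode φ ψ φ [ψ] (insert (defaultVar φ ψ) (φ.fv ∪ ψ.fv))
  | α :: l => saturatedNode φ ψ α ((node l).neg.flatMap inherited) (node l).dom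

def Valid : List (Formula Sig) → Prop
  | [] => True
  | α :: l => Valid l ∧ pos φ ψ (node φ ψ l) (.dia α)

lemma dom_finite : ∀ l, (node φ ψ l).dom.Finite
  | [] => (((φ.fv_finite.union ψ.fv_finite).insert _)).union (Finset.finite_toSet _)
  | _ :: l => (dom_finite l).union (Finset.finite_toSet _)

lemma defaultVar_mem_dom : ∀ l, defaultVar φ ψ ∈ (node φ ψ l).dom
  | [] => Or.inl (Set.mem_insert _ _)
  | _ :: l => Or.inl (defaultVar_mem_dom l)

lemma dom_subset_append (l : List (Formula Sig)) :
    ∀ a, (node φ ψ l).dom ⊆ (node φ ψ (a ++ l)).dom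
  | [] => subset_rfl
  | _ :: a => (dom_subset_append l a).trans Set.subset_union_left

lemma neg_subset_cons (α : Formula Sig) (l : List (Formula Sig)) :
    (node φ ψ l).neg.flatMap inherited ⊆ (node φ ψ (α :: l)).neg :=
  (saturatedNode_spec φ ψ _ _ _).choose_spec.1.subset

lemma dia_mem_neg_append {θ : Formula Sig} {l : List (Formula Sig)}
    (h : .dia θ ∈ (node φ ψ l).neg) :
    ∀ a, .dia θ ∈ (node φ ψ (a ++ l)).neg
  | [] => h
  | α :: a => neg_subset_cons φ ψ α _
      (mem_flatMap_inherited.mpr ⟨θ, dia_mem_neg_append h a, Or.inr rfl⟩)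

lemma mem_neg_append_of_dia {θ : Formula Sig} {l : List (Formula Sig)}
    (h : .dia θ ∈ (node φ ψ l).neg) {a : List (Formula Sig)} (ha : a ≠ []) :
    θ ∈ (node φ ψ (a ++ l)).neg := by
  obtain ⟨α, a, rfl⟩ := List.exists_cons_of_ne_nil ha
  exact neg_subset_cons φ ψ α _
    (mem_flatMap_inherited.mpr ⟨θ, dia_mem_neg_append φ ψ h a, Or.inl rfl⟩)

structure Good (n : Node Sig) : Prop where
  seed_inScope : n.seed.InScope n.dom (boundVars φ ψ) (consts φ ψ)
  dom_disjoint : Disjoint n.dom (boundVars φ ψ)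
  neg_inScope : ∀ χ ∈ n.neg, χ.InScope n.dom (boundVars φ ψ) (consts φ ψ)
  not_derives : ∀ χ ∈ n.neg, ¬ Derives n.seed χ
  saturated : Saturated n.neg n.dom

variable {φ ψ}

lemma Good.pos_inScope {n : Node Sig} (hn : Good φ ψ n) {χ : Formula Sig} (h : pos φ ψ n χ) :
    χ.InScope n.dom (boundVars φ ψ) (consts φ ψ) :=
  InstClosure.inScope hn.seed_inScope h

lemma Good.pos_derives {n : Node Sig} (hn : Good φ ψ n) {χ : Formula Sig} (h : pos φ ψ n χ) :
    Derives n.seed χ :=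
  InstClosure.derives hn.seed_inScope hn.dom_disjoint h

lemma good_saturatedNode {γ : Formula Sig} {ds : List (Formula Sig)} {V : Set ℕ}
    (hγ : γ.InScope V (boundVars φ ψ) (consts φ ψ))
    (hds : ∀ δ ∈ ds, δ.InScope V (boundVars φ ψ) (consts φ ψ) ∧ ¬ Derives γ δ)
    (hV : Disjoint V (boundVars φ ψ)) : Good φ ψ (saturatedNode φ ψ γ ds V) := by
  obtain ⟨Z, hZ, hdom⟩ := saturatedNode_spec φ ψ γ ds V
  refine ⟨?_, ?_, ?_, hZ.not_derives fun δ hδ => (hds δ hδ).2, ?_⟩ <;> rw [hdom]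
  · exact hγ.mono Set.subset_union_left
  · exact Disjoint.union_left hV <|
      (Finset.disjoint_coe.mpr hZ.disjoint).mono_right (boundVars_subset_vars φ ψ)
  · exact hZ.inScope fun δ hδ => (hds δ hδ).1
  · exact hZ.saturated.mono Set.subset_union_right

lemma good_node (hfree : Disjoint (φ.fv ∪ ψ.fv) (boundVars φ ψ)) (hcons : ¬ Derives φ ψ) :
    ∀ l, Valid φ ψ l → Good φ ψ (node φ ψ l)
  | [], _ => by
      have hscope : ∀ χ ∈ [φ, ψ], χ.InScope (insert (defaultVar φ ψ) (φ.fv ∪ ψ.fv))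
          (boundVars φ ψ) (consts φ ψ) := by
        simp only [List.mem_cons, List.not_mem_nil, or_false, forall_eq_or_imp, forall_eq]
        exact ⟨⟨fun _ h => Or.inr (Or.inl h), Set.subset_union_left, Set.subset_union_left⟩,
          ⟨fun _ h => Or.inr (Or.inr h), Set.subset_union_right, Set.subset_union_right⟩⟩
      refine good_saturatedNode (hscope φ (by simp))
        (by simpa using ⟨hscope ψ (by simp), hcons⟩) (Set.disjoint_insert_left.mpr ⟨?_, hfree⟩)
      exact fun h => defaultVar_notMem φ ψ (boundVars_subset_vars φ ψ h)
  | α :: l, ⟨hl, hα⟩ => by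
      have hn := good_node hfree hcons l hl
      refine good_saturatedNode (hn.pos_inScope hα).of_dia (fun δ hδ => ?_) hn.dom_disjoint
      obtain ⟨θ, hθ, rfl | rfl⟩ := mem_flatMap_inherited.mp hδ
      · refine ⟨(hn.neg_inScope _ hθ).of_dia, fun hαθ => hn.not_derives _ hθ ?_⟩
        exact (hn.pos_derives hα).cut hαθ.nec
      · refine ⟨hn.neg_inScope _ hθ, fun hαθ => hn.not_derives _ hθ ?_⟩
        exact ((hn.pos_derives hα).cut hαθ.nec).cut (.diaTrans θ)

variable (φ ψ)

lemma finite_inScope_terms (V : Set ℕ) (hV : V.Finite) (C : Set Sig.Const) (hC : C.Finite) :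
    {t : Term Sig | t.InScope V C}.Finite := by
  refine ((hV.image Term.var).union (hC.image Term.const)).subset ?_
  rintro (y | c) ht
  · exact Or.inl ⟨y, ht, rfl⟩
  · exact Or.inr ⟨c, ht, rfl⟩

open Classical in
/-- Domains must be finite, so constants not occurring in the sequent denote the default
variable. -/
noncomputable def model : Model Sig where
  W := {l // Valid φ ψ l}
  U := Term Sig
  nonempty := ⟨⟨[], trivial⟩⟩
  R w v := ∃ a ≠ [], v.1 = a ++ w.1
  D w := {t | t.InScope (node φ ψ w.1).dom (consts φ ψ)}
  Dfin w := finite_inScope_terms _ (dom_finite φ ψ w.1) _ (φ.consts_finite.union ψ.consts_finite)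
  I _ c := if c ∈ consts φ ψ then .const c else .var (defaultVar φ ψ)
  Imem w c := by
    split
    · assumption
    · exact defaultVar_mem_dom φ ψ w.1
  J w S := {ts | pos φ ψ (node φ ψ w.1) (.rel S ts) ∧
    ∀ i, (ts i).InScope (node φ ψ w.1).dom (consts φ ψ)}
  Jmem _ _ _ hts := hts.2

open Classical in
noncomputable def val (w : (model φ ψ).W) (n : ℕ) : Term Sig :=
  if n ∈ (node φ ψ w.1).dom then .var n else .var (defaultVar φ ψ)

lemma model_inclusive : (model φ ψ).Inclusive := by
  rintro w v ⟨a, -, hv⟩ t ht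
  cases t with
  | var y => exact (hv ▸ dom_subset_append φ ψ w.1 a) ht
  | const c => exact ht

lemma model_concordant : (model φ ψ).Concordant := fun _ _ _ _ => rfl

lemma model_adequate : (model φ ψ).Adequate := by
  refine ⟨model_inclusive φ ψ, ?_, model_concordant φ ψ⟩
  rintro w u v ⟨a, ha, hu⟩ ⟨b, -, hv⟩
  exact ⟨b ++ a, by simp [ha], by rw [hv, hu, List.append_assoc]⟩

variable {φ ψ}

lemma val_isAssignment (w : (model φ ψ).W) : (model φ ψ).IsAssignment w (val φ ψ w) := by
  intro n
  unfold val
  split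
  · assumption
  · exact defaultVar_mem_dom φ ψ w.1

lemma tval_val {w : (model φ ψ).W} {t : Term Sig}
    (ht : t.InScope (node φ ψ w.1).dom (consts φ ψ)) : (model φ ψ).tval w (val φ ψ w) t = t := by
  cases t with
  | var y => exact if_pos ht
  | const c => exact if_pos ht

lemma val_eq_of_R {w v : (model φ ψ).W} (hR : (model φ ψ).R w v) {n : ℕ}
    (hn : n ∈ (node φ ψ w.1).dom) : val φ ψ w n = val φ ψ v n := by
  obtain ⟨a, -, hv⟩ := hR
  rw [val, val, if_pos hn, if_pos ((hv ▸ dom_subset_append φ ψ w.1 a) hn)]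

def TruthAt (w : (model φ ψ).W) (χ : Formula Sig) : Prop :=
  (pos φ ψ (node φ ψ w.1) χ → (model φ ψ).Forces w (val φ ψ w) χ) ∧
    (χ ∈ (node φ ψ w.1).neg → ¬ (model φ ψ).Forces w (val φ ψ w) χ)

section TruthLemma

variable {w : (model φ ψ).W} (hw : Good φ ψ (node φ ψ w.1))
include hw

lemma truthAt_top : TruthAt w (.top : Formula Sig) :=
  ⟨fun _ => trivial, fun hN _ => hw.not_derives _ hN (.topIntro _)⟩

lemma truthAt_rel (S : Sig.Rel) (ts : Fin (Sig.arity S) → Term Sig) : TruthAt w (.rel S ts) := by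
  have hval : (∀ i, (ts i).InScope (node φ ψ w.1).dom (consts φ ψ)) →
      (fun i => (model φ ψ).tval w (val φ ψ w) (ts i)) = ts :=
    fun hi => funext fun i => tval_val (hi i)
  constructor
  · intro hP
    have hi := (hw.pos_inScope hP).rel_terms
    show _ ∈ (model φ ψ).J w S
    rw [hval hi]
    exact ⟨hP, hi⟩
  · intro hN hF
    have hP : pos φ ψ (node φ ψ w.1) (.rel S ts) :=
      hval (hw.neg_inScope _ hN).rel_terms ▸ hF.1
    exact hw.not_derives _ hN (hw.pos_derives hP)

lemma truthAt_and {α β : Formula Sig} (hα : TruthAt w α) (hβ : TruthAt w β) :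
    TruthAt w (.and α β) := by
  refine ⟨fun hP => ⟨hα.1 hP.left, hβ.1 hP.right⟩, fun hN hF => ?_⟩
  rcases hw.saturated.and_mem hN with h | h
  · exact hα.2 h hF.1
  · exact hβ.2 h hF.2

lemma truthAt_dia {α : Formula Sig} (hα : ∀ v : (model φ ψ).W, TruthAt v α) :
    TruthAt w (.dia α) := by
  have hcongr : ∀ v, (model φ ψ).R w v → α.fv ⊆ (node φ ψ w.1).dom →
      ((model φ ψ).Forces v (val φ ψ w) α ↔ (model φ ψ).Forces v (val φ ψ v) α) :=
    fun v hR hfv => Model.forces_congr (model_inclusive φ ψ)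
      ((val_isAssignment w).mono (model_inclusive φ ψ) hR) (val_isAssignment v)
      fun n hn => val_eq_of_R hR (hfv hn)
  constructor
  · intro hP
    let v : (model φ ψ).W := ⟨α :: w.1, w.2, hP⟩
    have hR : (model φ ψ).R w v := ⟨[α], by simp, rfl⟩
    refine ⟨v, hR, (hcongr v hR (hw.pos_inScope hP).fv_subset).mpr ((hα v).1 .seed)⟩
  · rintro hN ⟨v, hR, hF⟩
    have hαv : α ∈ (node φ ψ v.1).neg := by
      obtain ⟨a, ha, hv⟩ := hR
      exact hv ▸ mem_neg_append_of_dia φ ψ hN ha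
    exact (hα v).2 hαv ((hcongr v hR (hw.neg_inScope _ hN).fv_subset).mp hF)

lemma truthAt_all {x : ℕ} {θ : Formula Sig} (hθ : ∀ t, TruthAt w (θ.subst x t)) :
    TruthAt w (.all x θ) := by
  have hsubst : ∀ {t : Term Sig}, t.InScope (node φ ψ w.1).dom (consts φ ψ) →
      (Formula.all x θ).InScope (node φ ψ w.1).dom (boundVars φ ψ) (consts φ ψ) →
      ((model φ ψ).Forces w (val φ ψ w) (θ.subst x t) ↔
        (model φ ψ).Forces w (Function.update (val φ ψ w) x t) θ) := by
    intro t ht hscope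
    have hft : θ.freeFor x t := by
      cases t with
      | const c => exact θ.freeFor_const x c
      | var y => exact Formula.freeFor_var (fun hy => hw.dom_disjoint.notMem_of_mem_left ht
          (hscope.bv_subset (Set.mem_insert_of_mem x hy))) x
    rw [Model.forces_subst (model_inclusive φ ψ) (model_concordant φ ψ) hft
      (val_isAssignment w), tval_val ht]
  constructor
  · intro hP h hh hgh
    have hscope := hw.pos_inScope hP
    have := (hsubst (hh x) hscope).mp ((hθ (h x)).1 (.inst hP (hh x)))
    rwa [hgh.update_eq] at this
  · intro hN hF
    obtain ⟨z, hz, hzN⟩ := hw.saturated.all_mem hN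
    have hz' : (Term.var z : Term Sig).InScope (node φ ψ w.1).dom (consts φ ψ) := hz
    refine (hθ _).2 hzN ((hsubst hz' (hw.neg_inScope _ hN)).mpr ?_)
    exact hF _ ((val_isAssignment w).update x hz') (AltOn.update_self x _)

end TruthLemma

lemma truthAt (hgood : ∀ l, Valid φ ψ l → Good φ ψ (node φ ψ l)) (w : (model φ ψ).W)
    (χ : Formula Sig) : TruthAt w χ := by
  induction h : χ.size using Nat.strong_induction_on generalizing w χ with
  | _ n ih =>
  subst h
  have hw := hgood w.1 w.2
  cases χ with
  | top => exact truthAt_top hw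
  | rel S ts => exact truthAt_rel hw S ts
  | and α β =>
      exact truthAt_and hw (ih _ (by simp [Formula.size]) w α rfl)
        (ih _ (by simp [Formula.size]) w β rfl)
  | dia α => exact truthAt_dia hw fun v => ih _ (by simp [Formula.size]) v α rfl
  | all x θ =>
      exact truthAt_all hw fun t => ih _ (by simp [Formula.size, Formula.size_subst]) w _ rfl

end Canonical

def HasCountermodel (φ ψ : Formula Sig) : Prop :=
  ∃ M : Model Sig, M.Adequate ∧ ∃ (w : M.W) (g : ℕ → M.U),
    M.IsAssignment w g ∧ M.Forces w g φ ∧ ¬ M.Forces w g ψ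

lemma Canonical.hasCountermodel {φ ψ : Formula Sig}
    (hfree : Disjoint (φ.fv ∪ ψ.fv) (boundVars φ ψ)) (hcons : ¬ Derives φ ψ) :
    HasCountermodel φ ψ := by
  let root : (model φ ψ).W := ⟨[], trivial⟩
  have htruth := truthAt (good_node hfree hcons) root
  have hψ : ψ ∈ (node φ ψ []).neg :=
    (saturatedNode_spec φ ψ φ [ψ] _).choose_spec.1.subset List.mem_cons_self
  exact ⟨model φ ψ, model_adequate φ ψ, root, val φ ψ root, val_isAssignment root,
    (htruth φ).1 .seed, (htruth ψ).2 hψ⟩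

lemma HasCountermodel.of_subst_var {φ ψ : Formula Sig} {x z : ℕ} (hφ : z ∉ φ.bv) (hψ : z ∉ ψ.bv)
    (h : HasCountermodel (φ.subst x (.var z)) (ψ.subst x (.var z))) : HasCountermodel φ ψ := by
  obtain ⟨M, hM, w, g, hg, hφz, hψz⟩ := h
  have hsubst := fun {χ : Formula Sig} (hχ : z ∉ χ.bv) =>
    Model.forces_subst hM.1 hM.2.2 (Formula.freeFor_var hχ x) hg
  exact ⟨M, hM, w, _, hg.update x (Model.tval_mem hg _), (hsubst hφ).mp hφz,
    fun hψ' => hψz ((hsubst hψ).mpr hψ')⟩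

lemma hasCountermodel_of_fv_inter_bv_subset (X : Finset ℕ) :
    ∀ φ ψ : Formula Sig, (φ.fv ∪ ψ.fv) ∩ (φ.bv ∪ ψ.bv) ⊆ X → ¬ Derives φ ψ →
      HasCountermodel φ ψ := by
  classical
  induction X using Finset.induction_on with
  | empty =>
      intro φ ψ hclash hcons
      exact Canonical.hasCountermodel
        (Set.disjoint_left.mpr fun _ hfv hbv => by simpa using hclash ⟨hfv, hbv⟩) hcons
  | insert x X _ ih =>
      intro φ ψ hclash hcons
      obtain ⟨z, hz⟩ := Infinite.exists_notMem_finset (φ.vars ∪ ψ.vars)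
      simp only [Finset.mem_union, not_or] at hz
      have hφ : z ∉ φ.fv ∧ z ∉ φ.bv :=
        ⟨fun h => hz.1 (φ.fv_subset_vars h), fun h => hz.1 (φ.bv_subset_vars h)⟩
      have hψ : z ∉ ψ.fv ∧ z ∉ ψ.bv :=
        ⟨fun h => hz.2 (ψ.fv_subset_vars h), fun h => hz.2 (ψ.bv_subset_vars h)⟩
      refine .of_subst_var (x := x) hφ.2 hψ.2 (ih _ _ ?_ fun hd => hcons (.of_subst_var hφ hψ hd))
      rintro m ⟨hfv, hbv⟩
      rw [Formula.bv_subst, Formula.bv_subst] at hbv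
      have hmz : m ≠ z := by rintro rfl; exact hbv.elim hφ.2 hψ.2
      have hm : (m ∈ φ.fv ∨ m ∈ ψ.fv) ∧ m ≠ x := by
        have := Set.union_subset_union (φ.fv_subst x (.var z)) (ψ.fv_subst x (.var z)) hfv
        simp only [Term.fv, Set.mem_union, Set.mem_sdiff, Set.mem_singleton_iff] at this
        tauto
      simpa [hm.2] using hclash ⟨hm.1, hbv⟩

end

/-- Relational completeness of QRC₁: if φ ⊢ ψ is not derivable, then there
are an adequate model M, a world w, and a w-assignment g with M,w ⊩^g φ and M,w ⊮^g ψ. -/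
theorem qrc1_relational_completeness (Sig : Signature) (φ ψ : Formula Sig)
    (h : ¬ Derives φ ψ) :
    ∃ (M : Model Sig), M.Adequate ∧ ∃ (w : M.W) (g : ℕ → M.U),
      M.IsAssignment w g ∧ M.Forces w g φ ∧ ¬ M.Forces w g ψ :=
  hasCountermodel_of_fv_inter_bv_subset (φ.vars ∪ ψ.vars) φ ψ (Set.inter_subset_left.trans <| by
    rw [Finset.coe_union]; exact Set.union_subset_union φ.fv_subset_vars ψ.fv_subset_vars) h
end
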